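/- Let 𝒫 be a partition of Ω and let P be a dF-coherent conditional probability on 𝒜_C(𝒫). Let C|D be a conditional event with C ∩ D ≠ ∅ and Cᶜ ∩ D ≠ ∅. Then a map ν on 𝒜_C(𝒫) ∪ {C|D} that agrees with P on 𝒜_C(𝒫) is a dF-coherent conditional probability if and only if P((C|D)_*) ≤ ν(C|D) ≤ P((C|D)^*). -/
import Mathlib


open Set

/-- Real-valued indicator function of a set. -/
noncomputable def ind {Ω : Type*} (B : Set Ω) : Ω → ℝ := B.indicator 1

/-- A bounded gamble. -/
def Bdd {Ω : Type*} (X : Ω → ℝ) : Prop := BddAbove (Set.range X) ∧ BddBelow (Set.range X)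

/-- `S` is a set of conditional gambles: each pair has nonempty conditioning event and
bounded gamble. -/
def IsCondGambleSet {Ω : Type*} (S : Set ((Ω → ℝ) × Set Ω)) : Prop :=
  ∀ p ∈ S, p.2.Nonempty ∧ Bdd p.1

/-- `S` is a set of conditional events: each member is an indicator gamble conditional on a
nonempty event. -/
def IsCondEventSet {Ω : Type*} (S : Set ((Ω → ℝ) × Set Ω)) : Prop :=
  ∀ p ∈ S, ∃ A B : Set Ω, B.Nonempty ∧ p = (ind A, B)

/-- The term `1_B · (X − P(X|B))` appearing in betting gains. -/
noncomputable def gainTerm {Ω : Type*} (P : (Ω → ℝ) × Set Ω → ℝ) (X : Ω → ℝ) (B : Set Ω) :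
    Ω → ℝ :=
  B.indicator (fun ω => X ω - P (X, B))

/-- Convex conditional lower prevision on `S`. -/
def IsConvexLP {Ω : Type*} (S : Set ((Ω → ℝ) × Set Ω)) (P : (Ω → ℝ) × Set Ω → ℝ) : Prop :=
  ∀ n : ℕ, 1 ≤ n → ∀ (X0 : Ω → ℝ) (B0 : Set Ω) (X : Fin n → Ω → ℝ) (Bs : Fin n → Set Ω)
    (s0 : ℝ) (s : Fin n → ℝ),
    (X0, B0) ∈ S → (∀ i, (X i, Bs i) ∈ S) → (∀ i, 0 ≤ s i) → (∑ i, s i) = s0 → 0 < s0 →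
    0 ≤ sSup ((fun ω => (∑ i, s i * gainTerm P (X i) (Bs i) ω) - s0 * gainTerm P X0 B0 ω)
        '' (B0 ∪ ⋃ i, Bs i))

/-- Centered convex (C-convex) conditional lower prevision on `S`. -/
def IsCConvexLP {Ω : Type*} (S : Set ((Ω → ℝ) × Set Ω)) (P : (Ω → ℝ) × Set Ω → ℝ) : Prop :=
  IsConvexLP S P ∧
    ∀ (X : Ω → ℝ) (B : Set Ω), (X, B) ∈ S →
      ((fun _ => (0 : ℝ)), B) ∈ S ∧ P ((fun _ => (0 : ℝ)), B) = 0

/-- 1-convex conditional lower prevision on `S`. -/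
def Is1ConvexLP {Ω : Type*} (S : Set ((Ω → ℝ) × Set Ω)) (P : (Ω → ℝ) × Set Ω → ℝ) : Prop :=
  ∀ (X0 X1 : Ω → ℝ) (B0 B1 : Set Ω) (t : ℝ),
    (X0, B0) ∈ S → (X1, B1) ∈ S → 0 < t →
    0 ≤ sSup ((fun ω => t * gainTerm P X1 B1 ω - t * gainTerm P X0 B0 ω) '' (B0 ∪ B1))

/-- Centered 1-convex conditional lower prevision on `S`. -/
def IsC1ConvexLP {Ω : Type*} (S : Set ((Ω → ℝ) × Set Ω)) (P : (Ω → ℝ) × Set Ω → ℝ) : Prop :=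
  Is1ConvexLP S P ∧
    ∀ (X : Ω → ℝ) (B : Set Ω), (X, B) ∈ S →
      ((fun _ => (0 : ℝ)), B) ∈ S ∧ P ((fun _ => (0 : ℝ)), B) = 0

/-- Williams-coherent conditional lower prevision on `S`. -/
def IsWCoherent {Ω : Type*} (S : Set ((Ω → ℝ) × Set Ω)) (P : (Ω → ℝ) × Set Ω → ℝ) : Prop :=
  ∀ (n : ℕ) (X0 : Ω → ℝ) (B0 : Set Ω) (X : Fin n → Ω → ℝ) (Bs : Fin n → Set Ω)
    (s0 : ℝ) (s : Fin n → ℝ),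
    (X0, B0) ∈ S → (∀ i, (X i, Bs i) ∈ S) → 0 ≤ s0 → (∀ i, 0 ≤ s i) →
    0 ≤ sSup ((fun ω => (∑ i, s i * gainTerm P (X i) (Bs i) ω) - s0 * gainTerm P X0 B0 ω)
        '' (B0 ∪ ⋃ i, Bs i))

/-- de Finetti-coherent conditional prevision on `S`. -/
def IsdFCoherent {Ω : Type*} (S : Set ((Ω → ℝ) × Set Ω)) (P : (Ω → ℝ) × Set Ω → ℝ) : Prop :=
  ∀ (n : ℕ), 1 ≤ n → ∀ (X : Fin n → Ω → ℝ) (Bs : Fin n → Set Ω) (s : Fin n → ℝ),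
    (∀ i, (X i, Bs i) ∈ S) →
    0 ≤ sSup ((fun ω => ∑ i, s i * gainTerm P (X i) (Bs i) ω) '' (⋃ i, Bs i))

/-- Goodman–Nguyen relation on conditional events: `A|B ≤GN C|D`. -/
def GNe {Ω : Type*} (A B C D : Set Ω) : Prop :=
  A ∩ B ⊆ C ∩ D ∧ Cᶜ ∩ D ⊆ Aᶜ ∩ B

/-- Goodman–Nguyen relation on conditional gambles: `X|B ≤GN Y|D`. -/
def GNg {Ω : Type*} (X : Ω → ℝ) (B : Set Ω) (Y : Ω → ℝ) (D : Set Ω) : Prop :=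
  ∀ ω : Ω, ind B ω * X ω + ind (Bᶜ ∩ D) ω * sSup (X '' B)
    ≤ ind D ω * Y ω + ind (B ∩ Dᶜ) ω * sInf (Y '' D)

/-- `pt` is a partition of `Ω`. -/
def IsPartition {Ω : Type*} (pt : Set (Set Ω)) : Prop :=
  (∀ e ∈ pt, e.Nonempty) ∧ (∀ e ∈ pt, ∀ f ∈ pt, e ≠ f → e ∩ f = ∅) ∧ ⋃₀ pt = Set.univ

/-- `E` is logically dependent on the partition `pt` (a union of its atoms). -/
def memA {Ω : Type*} (pt : Set (Set Ω)) (E : Set Ω) : Prop := ∃ T ⊆ pt, E = ⋃₀ T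

/-- Inner event `E_*` w.r.t. partition `pt`. -/
def innerE {Ω : Type*} (pt : Set (Set Ω)) (E : Set Ω) : Set Ω := ⋃₀ {e ∈ pt | e ⊆ E}

/-- Outer event `E^*` w.r.t. partition `pt`. -/
def outerE {Ω : Type*} (pt : Set (Set Ω)) (E : Set Ω) : Set Ω := ⋃₀ {e ∈ pt | (e ∩ E).Nonempty}

/-- `𝒜_C(pt)`, as a set of conditional (indicator) gambles. -/
def AC {Ω : Type*} (pt : Set (Set Ω)) : Set ((Ω → ℝ) × Set Ω) :=
  {p | ∃ A B : Set Ω, memA pt A ∧ memA pt B ∧ B.Nonempty ∧ p = (ind A, B)}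

/-- The inner conditional event `(C|D)_*`, as a conditional indicator gamble. -/
noncomputable def innerCE {Ω : Type*} (pt : Set (Set Ω)) (C D : Set Ω) : (Ω → ℝ) × Set Ω :=
  (ind (innerE pt (C ∩ D)), innerE pt (C ∩ D) ∪ outerE pt (Cᶜ ∩ D))

/-- The outer conditional event `(C|D)^*`, as a conditional indicator gamble. -/
noncomputable def outerCE {Ω : Type*} (pt : Set (Set Ω)) (C D : Set Ω) : (Ω → ℝ) × Set Ω :=
  (ind (outerE pt (C ∩ D)), outerE pt (C ∩ D) ∪ innerE pt (Cᶜ ∩ D))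

section Helpers
variable {Ω : Type*}

open Classical in
lemma ind_apply (A : Set Ω) (ω : Ω) : ind A ω = if ω ∈ A then 1 else 0 := by
  simp [ind, Set.indicator_apply]

open Classical in
lemma gainTerm_apply (P : (Ω → ℝ) × Set Ω → ℝ) (X : Ω → ℝ) (B : Set Ω) (ω : Ω) :
    gainTerm P X B ω = if ω ∈ B then X ω - P (X, B) else 0 := by
  simp [gainTerm, Set.indicator_apply]

lemma gainTerm_abs_le (P : (Ω → ℝ) × Set Ω → ℝ) (A B : Set Ω) (ω : Ω) :
    |gainTerm P (ind A) B ω| ≤ 1 + |P (ind A, B)| := by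
  rw [gainTerm_apply, ind_apply]
  have h0 : (0:ℝ) ≤ 1 + |P (ind A, B)| := by positivity
  split_ifs with h h2
  · calc |(1:ℝ) - P (ind A, B)| ≤ |(1:ℝ)| + |P (ind A, B)| := abs_sub _ _
      _ = 1 + |P (ind A, B)| := by rw [abs_one]
  · calc |(0:ℝ) - P (ind A, B)| = |P (ind A, B)| := by rw [zero_sub, abs_neg]
      _ ≤ 1 + |P (ind A, B)| := by linarith
  · simpa using h0

variable {pt : Set (Set Ω)} (hpt : IsPartition pt)
include hpt

lemma exists_atom (ω : Ω) : ∃ e ∈ pt, ω ∈ e := by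
  have := hpt.2.2
  have hω : ω ∈ ⋃₀ pt := this ▸ Set.mem_univ ω
  simpa using hω

lemma atom_unique {e f : Set Ω} {ω : Ω} (he : e ∈ pt) (hf : f ∈ pt) (hωe : ω ∈ e)
    (hωf : ω ∈ f) : e = f := by
  by_contra hne
  have := hpt.2.1 e he f hf hne
  exact absurd (Set.mem_inter hωe hωf) (by simp [this])

lemma atom_subset_of_memA {E e : Set Ω} {ω : Ω} (hE : memA pt E) (he : e ∈ pt)
    (hωe : ω ∈ e) (hωE : ω ∈ E) : e ⊆ E := by
  obtain ⟨T, hT, rfl⟩ := hE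
  obtain ⟨f, hfT, hωf⟩ := hωE
  have : e = f := atom_unique hpt he (hT hfT) hωe hωf
  exact this ▸ fun y hy => ⟨f, hfT, this ▸ hy⟩

lemma mem_iff_of_atom {E e : Set Ω} {ω ω' : Ω} (hE : memA pt E) (he : e ∈ pt)
    (hω : ω ∈ e) (hω' : ω' ∈ e) : ω ∈ E ↔ ω' ∈ E := by
  constructor <;> intro h
  · exact atom_subset_of_memA hpt hE he hω h hω'
  · exact atom_subset_of_memA hpt hE he hω' h hω

end Helpers
section Helpers2
variable {Ω : Type*} {pt : Set (Set Ω)}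

lemma memA_innerE (E : Set Ω) : memA pt (innerE pt E) :=
  ⟨{e ∈ pt | e ⊆ E}, fun e he => he.1, rfl⟩

lemma memA_outerE (E : Set Ω) : memA pt (outerE pt E) :=
  ⟨{e ∈ pt | (e ∩ E).Nonempty}, fun e he => he.1, rfl⟩

lemma memA_union {A B : Set Ω} (hA : memA pt A) (hB : memA pt B) : memA pt (A ∪ B) := by
  obtain ⟨T, hT, rfl⟩ := hA
  obtain ⟨U, hU, rfl⟩ := hB
  exact ⟨T ∪ U, Set.union_subset hT hU, (Set.sUnion_union T U).symm⟩

lemma innerE_subset (E : Set Ω) : innerE pt E ⊆ E := by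
  rintro ω ⟨e, ⟨_, heE⟩, hω⟩
  exact heE hω

variable (hpt : IsPartition pt)
include hpt

lemma subset_outerE (E : Set Ω) : E ⊆ outerE pt E := by
  intro ω hω
  obtain ⟨e, he, hωe⟩ := exists_atom hpt ω
  exact ⟨e, ⟨he, ⟨ω, hωe, hω⟩⟩, hωe⟩

lemma atom_subset_of_mem_innerE {E e : Set Ω} {ω : Ω} (he : e ∈ pt) (hωe : ω ∈ e)
    (hω : ω ∈ innerE pt E) : e ⊆ E := by
  obtain ⟨f, ⟨hf, hfE⟩, hωf⟩ := hω
  exact (atom_unique hpt he hf hωe hωf) ▸ hfE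

lemma atom_inter_of_mem_outerE {E e : Set Ω} {ω : Ω} (he : e ∈ pt) (hωe : ω ∈ e)
    (hω : ω ∈ outerE pt E) : (e ∩ E).Nonempty := by
  obtain ⟨f, ⟨hf, hfE⟩, hωf⟩ := hω
  exact (atom_unique hpt he hf hωe hωf) ▸ hfE

lemma atom_subset_innerE {E e : Set Ω} (he : e ∈ pt) (heE : e ⊆ E) : e ⊆ innerE pt E :=
  fun ω hω => ⟨e, ⟨he, heE⟩, hω⟩

lemma atom_subset_outerE {E e : Set Ω} (he : e ∈ pt) (heE : (e ∩ E).Nonempty) :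
    e ⊆ outerE pt E := fun ω hω => ⟨e, ⟨he, heE⟩, hω⟩

end Helpers2

section Helpers3
variable {Ω : Type*} {pt : Set (Set Ω)} {C D : Set Ω}

lemma innerCE_mem_AC (hpt : IsPartition pt) (h2 : (Cᶜ ∩ D).Nonempty) :
    innerCE pt C D ∈ AC pt := by
  refine ⟨innerE pt (C ∩ D), innerE pt (C ∩ D) ∪ outerE pt (Cᶜ ∩ D), memA_innerE _,
    memA_union (memA_innerE _) (memA_outerE _), ?_, rfl⟩
  exact Set.Nonempty.inr (h2.mono (subset_outerE hpt _))

lemma outerCE_mem_AC (hpt : IsPartition pt) (h1 : (C ∩ D).Nonempty) :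
    outerCE pt C D ∈ AC pt := by
  refine ⟨outerE pt (C ∩ D), outerE pt (C ∩ D) ∪ innerE pt (Cᶜ ∩ D), memA_outerE _,
    memA_union (memA_outerE _) (memA_innerE _), ?_, rfl⟩
  exact Set.Nonempty.inl (h1.mono (subset_outerE hpt _))

lemma gainTerm_congr {P ν : (Ω → ℝ) × Set Ω → ℝ} {X : Ω → ℝ} {B : Set Ω}
    (h : ν (X, B) = P (X, B)) : gainTerm ν X B = gainTerm P X B := by
  unfold gainTerm; rw [h]

lemma gainTerm_const_on_atom (hpt : IsPartition pt) {P : (Ω → ℝ) × Set Ω → ℝ} {A B e : Set Ω}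
    (hA : memA pt A) (hB : memA pt B) (he : e ∈ pt) {ω ω' : Ω} (hω : ω ∈ e) (hω' : ω' ∈ e) :
    gainTerm P (ind A) B ω = gainTerm P (ind A) B ω' := by
  rw [gainTerm_apply, gainTerm_apply, ind_apply, ind_apply]
  have h1 := mem_iff_of_atom hpt hA he hω hω'
  have h2 := mem_iff_of_atom hpt hB he hω hω'
  have ha := propext h1
  have hb := propext h2
  rw [ha, hb]

lemma bddAbove_image_of_le {f : Ω → ℝ} {E : Set Ω} {M : ℝ} (h : ∀ ω, f ω ≤ M) :
    BddAbove (f '' E) := by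
  refine ⟨M, ?_⟩
  rintro y ⟨ω, _, rfl⟩
  exact h ω

end Helpers3
section Forward
variable {Ω : Type*}

lemma coh_bound {S : Set ((Ω → ℝ) × Set Ω)} {ν : (Ω → ℝ) × Set Ω → ℝ}
    (hco : IsdFCoherent S ν) {n : ℕ} (hn : 1 ≤ n) (X : Fin n → Ω → ℝ) (Bs : Fin n → Set Ω)
    (s : Fin n → ℝ) (hmem : ∀ i, (X i, Bs i) ∈ S) {c : ℝ}
    (hub : ∀ ω ∈ ⋃ i, Bs i, (∑ i, s i * gainTerm ν (X i) (Bs i) ω) ≤ c)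
    (hne : (⋃ i, Bs i).Nonempty) : 0 ≤ c := by
  refine le_trans (hco n hn X Bs s hmem) (csSup_le (hne.image _) ?_)
  rintro y ⟨ω, hω, rfl⟩
  exact hub ω hω

lemma coh_single {S : Set ((Ω → ℝ) × Set Ω)} {ν : (Ω → ℝ) × Set Ω → ℝ}
    (hco : IsdFCoherent S ν) {A B : Set Ω} (hmem : (ind A, B) ∈ S) (hne : B.Nonempty)
    (s : ℝ) {c : ℝ} (hub : ∀ ω ∈ B, s * gainTerm ν (ind A) B ω ≤ c) : 0 ≤ c := by
  refine coh_bound hco le_rfl (fun _ => ind A) (fun _ => B) (fun _ => s)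
    (fun _ => hmem) (fun ω hω => ?_) (by simpa using hne)
  have hωB : ω ∈ B := by simpa using hω
  simpa using hub ω hωB

lemma coh_val_mem_Icc {S : Set ((Ω → ℝ) × Set Ω)} {ν : (Ω → ℝ) × Set Ω → ℝ}
    (hco : IsdFCoherent S ν) {A B : Set Ω} (hmem : (ind A, B) ∈ S) (hne : B.Nonempty) :
    0 ≤ ν (ind A, B) ∧ ν (ind A, B) ≤ 1 := by
  constructor
  · refine coh_single hco hmem hne (-1) (fun ω hω => ?_)
    rw [gainTerm_apply, ind_apply]
    split_ifs <;> linarith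
  · have : (0:ℝ) ≤ 1 - ν (ind A, B) := by
      refine coh_single hco hmem hne 1 (fun ω hω => ?_)
      rw [gainTerm_apply, ind_apply]
      split_ifs <;> linarith
    linarith

lemma coh_pair {S : Set ((Ω → ℝ) × Set Ω)} {ν : (Ω → ℝ) × Set Ω → ℝ}
    (hco : IsdFCoherent S ν) {A B A' B' : Set Ω}
    (hmem : (ind A, B) ∈ S) (hmem' : (ind A', B') ∈ S)
    (hne : (B ∪ B').Nonempty) {c : ℝ}
    (hub : ∀ ω ∈ B ∪ B',
      gainTerm ν (ind A) B ω - gainTerm ν (ind A') B' ω ≤ c) : 0 ≤ c := by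
  refine coh_bound hco (n := 2) (by norm_num) ![ind A, ind A'] ![B, B'] ![1, -1]
    (fun i => by fin_cases i <;> simpa) (fun ω hω => ?_) ?_
  · have hωB : ω ∈ B ∪ B' := by
      simp only [Set.mem_iUnion] at hω
      obtain ⟨i, hi⟩ := hω
      fin_cases i
      · exact Or.inl hi
      · exact Or.inr hi
    have := hub ω hωB
    rw [Fin.sum_univ_two]
    simpa using this
  · obtain ⟨ω, hω⟩ := hne
    rcases hω with h | h
    · exact ⟨ω, Set.mem_iUnion.mpr ⟨0, h⟩⟩
    · exact ⟨ω, Set.mem_iUnion.mpr ⟨1, h⟩⟩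

end Forward
section ForwardMain
variable {Ω : Type*} {pt : Set (Set Ω)} {C D : Set Ω} {P ν : (Ω → ℝ) × Set Ω → ℝ}

lemma forward_dir (hpt : IsPartition pt)
    (h1 : (C ∩ D).Nonempty) (h2 : (Cᶜ ∩ D).Nonempty)
    (hag : ∀ p ∈ AC pt, ν p = P p)
    (hco : IsdFCoherent (AC pt ∪ {(ind C, D)}) ν) :
    P (innerCE pt C D) ≤ ν (ind C, D) ∧ ν (ind C, D) ≤ P (outerCE pt C D) := by
  set x := ν (ind C, D) with hxdef
  set A1 := innerE pt (C ∩ D) with hA1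
  set B1 := innerE pt (C ∩ D) ∪ outerE pt (Cᶜ ∩ D) with hB1
  set A2 := outerE pt (C ∩ D) with hA2
  set B2 := outerE pt (C ∩ D) ∪ innerE pt (Cᶜ ∩ D) with hB2
  have hDne : D.Nonempty := h1.mono Set.inter_subset_right
  have hinS : (ind C, D) ∈ AC pt ∪ {(ind C, D)} := Or.inr rfl
  have hInAC : (ind A1, B1) ∈ AC pt := innerCE_mem_AC hpt h2
  have hOutAC : (ind A2, B2) ∈ AC pt := outerCE_mem_AC hpt h1
  have hInS : (ind A1, B1) ∈ AC pt ∪ {(ind C, D)} := Or.inl hInAC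
  have hOutS : (ind A2, B2) ∈ AC pt ∪ {(ind C, D)} := Or.inl hOutAC
  have hB1ne : B1.Nonempty := (h2.mono (subset_outerE hpt _)).mono Set.subset_union_right
  have hB2ne : B2.Nonempty := (h1.mono (subset_outerE hpt _)).mono Set.subset_union_left
  have hagIn : ν (ind A1, B1) = P (innerCE pt C D) := hag _ hInAC
  have hagOut : ν (ind A2, B2) = P (outerCE pt C D) := hag _ hOutAC
  set p := ν (ind A1, B1) with hpdef
  set q := ν (ind A2, B2) with hqdef
  have hxIcc := coh_val_mem_Icc hco hinS hDne
  have hpIcc := coh_val_mem_Icc hco hInS hB1ne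
  have hqIcc := coh_val_mem_Icc hco hOutS hB2ne
  rw [← hagIn, ← hagOut]
  constructor
  · -- p ≤ x
    have hkey : (0:ℝ) ≤ x - p := by
      refine coh_pair hco hInS hinS (hB1ne.mono Set.subset_union_left) (fun ω hω => ?_)
      rw [gainTerm_apply, gainTerm_apply, ind_apply, ind_apply, ← hpdef, ← hxdef]
      have hsub1 : A1 ⊆ C ∩ D := innerE_subset _
      have hsub2 : Cᶜ ∩ D ⊆ B1 := (subset_outerE hpt _).trans Set.subset_union_right
      by_cases hA : ω ∈ A1
      · have hCD : ω ∈ C ∩ D := hsub1 hA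
        have hB : ω ∈ B1 := Set.subset_union_left hA
        rw [if_pos hB, if_pos hA, if_pos hCD.2, if_pos hCD.1]
        linarith
      · by_cases hB : ω ∈ B1
        · rw [if_pos hB, if_neg hA]
          by_cases hD : ω ∈ D
          · rw [if_pos hD]
            by_cases hC : ω ∈ C
            · rw [if_pos hC]; linarith
            · rw [if_neg hC]; linarith
          · rw [if_neg hD]; linarith [hxIcc.1]
        · have hD : ω ∈ D := by
            rcases hω with h | h
            · exact absurd h hB
            · exact h
          have hC : ω ∈ C := by
            by_contra hC
            exact hB (hsub2 ⟨hC, hD⟩)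
          rw [if_neg hB, if_pos hD, if_pos hC]
          linarith [hpIcc.2]
    linarith
  · -- x ≤ q
    have hkey : (0:ℝ) ≤ q - x := by
      refine coh_pair hco hinS hOutS ?_ (fun ω hω => ?_)
      · exact hDne.mono Set.subset_union_left
      rw [gainTerm_apply, gainTerm_apply, ind_apply, ind_apply, ← hqdef, ← hxdef]
      have hsub1 : C ∩ D ⊆ A2 := subset_outerE hpt _
      have hsub2 : innerE pt (Cᶜ ∩ D) ⊆ Cᶜ ∩ D := innerE_subset _
      by_cases hD : ω ∈ D
      · rw [if_pos hD]
        by_cases hC : ω ∈ C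
        · have hA : ω ∈ A2 := hsub1 ⟨hC, hD⟩
          have hB : ω ∈ B2 := Set.subset_union_left hA
          rw [if_pos hC, if_pos hB, if_pos hA]
          linarith
        · rw [if_neg hC]
          by_cases hB : ω ∈ B2
          · rw [if_pos hB]
            by_cases hA : ω ∈ A2
            · rw [if_pos hA]; linarith
            · rw [if_neg hA]; linarith
          · rw [if_neg hB]; linarith [hqIcc.1]
      · have hB : ω ∈ B2 := by
          rcases hω with h | h
          · exact absurd h hD
          · exact h
        have hA : ω ∈ A2 := by
          rcases hB with h | h
          · exact h
          · exact absurd (hsub2 h).2 hD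
        rw [if_neg hD, if_pos hB, if_pos hA]
        linarith [hxIcc.2]
    linarith

end ForwardMain
section StepA
variable {Ω : Type*} {pt : Set (Set Ω)}

open Classical in
lemma stepA_outer (hpt : IsPartition pt) {C D e : Set Ω} (he : e ∈ pt) {ω : Ω}
    (hωe : ω ∈ e) {t x q : ℝ} (ht : 0 ≤ t) (hxq : x ≤ q) :
    ∃ ω' ∈ e, (ω ∈ outerE pt (C ∩ D) ∪ innerE pt (Cᶜ ∩ D) → ω' ∈ D) ∧
      t * (if ω ∈ outerE pt (C ∩ D) ∪ innerE pt (Cᶜ ∩ D) then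
          (if ω ∈ outerE pt (C ∩ D) then (1:ℝ) else 0) - q else 0)
        ≤ t * (if ω' ∈ D then (if ω' ∈ C then (1:ℝ) else 0) - x else 0) := by
  by_cases hB : ω ∈ outerE pt (C ∩ D) ∪ innerE pt (Cᶜ ∩ D)
  · by_cases hA : ω ∈ outerE pt (C ∩ D)
    · obtain ⟨ω', hω'e, hω'CD⟩ := atom_inter_of_mem_outerE hpt he hωe hA
      refine ⟨ω', hω'e, fun _ => hω'CD.2, ?_⟩
      rw [if_pos hB, if_pos hA, if_pos hω'CD.2, if_pos hω'CD.1]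
      exact mul_le_mul_of_nonneg_left (by linarith) ht
    · have hin : ω ∈ innerE pt (Cᶜ ∩ D) := hB.resolve_left hA
      have hCD : ω ∈ Cᶜ ∩ D := innerE_subset _ hin
      refine ⟨ω, hωe, fun _ => hCD.2, ?_⟩
      rw [if_pos hB, if_neg hA, if_pos hCD.2, if_neg (hCD.1 : ω ∉ C)]
      exact mul_le_mul_of_nonneg_left (by linarith) ht
  · have hnotA : ω ∉ outerE pt (C ∩ D) := fun h => hB (Or.inl h)
    have hnotI : ω ∉ innerE pt (Cᶜ ∩ D) := fun h => hB (Or.inr h)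
    have heCD : ∀ y ∈ e, y ∉ C ∩ D := by
      intro y hy hyCD
      exact hnotA (atom_subset_outerE hpt he ⟨y, hy, hyCD⟩ hωe)
    have heCcD : ¬ e ⊆ Cᶜ ∩ D := fun h => hnotI (atom_subset_innerE hpt he h hωe)
    obtain ⟨ω', hω'e, hω'n⟩ : ∃ ω' ∈ e, ω' ∉ Cᶜ ∩ D := by
      by_contra h; push_neg at h; exact heCcD h
    have hω'D : ω' ∉ D := by
      intro hD
      by_cases hC : ω' ∈ C
      · exact heCD ω' hω'e ⟨hC, hD⟩
      · exact hω'n ⟨hC, hD⟩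
    refine ⟨ω', hω'e, fun h => absurd h hB, ?_⟩
    rw [if_neg hB, if_neg hω'D]

open Classical in
lemma stepA_inner (hpt : IsPartition pt) {C D e : Set Ω} (he : e ∈ pt) {ω : Ω}
    (hωe : ω ∈ e) {t x p : ℝ} (ht : t ≤ 0) (hpx : p ≤ x) :
    ∃ ω' ∈ e, (ω ∈ innerE pt (C ∩ D) ∪ outerE pt (Cᶜ ∩ D) → ω' ∈ D) ∧
      t * (if ω ∈ innerE pt (C ∩ D) ∪ outerE pt (Cᶜ ∩ D) then
          (if ω ∈ innerE pt (C ∩ D) then (1:ℝ) else 0) - p else 0)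
        ≤ t * (if ω' ∈ D then (if ω' ∈ C then (1:ℝ) else 0) - x else 0) := by
  by_cases hB : ω ∈ innerE pt (C ∩ D) ∪ outerE pt (Cᶜ ∩ D)
  · by_cases hA : ω ∈ innerE pt (C ∩ D)
    · have hCD : ω ∈ C ∩ D := innerE_subset _ hA
      refine ⟨ω, hωe, fun _ => hCD.2, ?_⟩
      rw [if_pos hB, if_pos hA, if_pos hCD.2, if_pos hCD.1]
      exact mul_le_mul_of_nonpos_left (by linarith) ht
    · have hout : ω ∈ outerE pt (Cᶜ ∩ D) := hB.resolve_left hA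
      obtain ⟨ω', hω'e, hω'CD⟩ := atom_inter_of_mem_outerE hpt he hωe hout
      refine ⟨ω', hω'e, fun _ => hω'CD.2, ?_⟩
      rw [if_pos hB, if_neg hA, if_pos hω'CD.2, if_neg (hω'CD.1 : ω' ∉ C)]
      exact mul_le_mul_of_nonpos_left (by linarith) ht
  · have hnotA : ω ∉ innerE pt (C ∩ D) := fun h => hB (Or.inl h)
    have hnotO : ω ∉ outerE pt (Cᶜ ∩ D) := fun h => hB (Or.inr h)
    have heCcD : ∀ y ∈ e, y ∉ Cᶜ ∩ D := by
      intro y hy hyCD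
      exact hnotO (atom_subset_outerE hpt he ⟨y, hy, hyCD⟩ hωe)
    have heCD : ¬ e ⊆ C ∩ D := fun h => hnotA (atom_subset_innerE hpt he h hωe)
    obtain ⟨ω', hω'e, hω'n⟩ : ∃ ω' ∈ e, ω' ∉ C ∩ D := by
      by_contra h; push_neg at h; exact heCD h
    have hω'D : ω' ∉ D := by
      intro hD
      by_cases hC : ω' ∈ C
      · exact hω'n ⟨hC, hD⟩
      · exact heCcD ω' hω'e ⟨hC, hD⟩
    refine ⟨ω', hω'e, fun h => absurd h hB, ?_⟩
    rw [if_neg hB, if_neg hω'D]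

end StepA
section BackwardCore
variable {Ω : Type*} {pt : Set (Set Ω)} {P ν : (Ω → ℝ) × Set Ω → ℝ} {C D : Set Ω}

open Classical in
lemma backward_core (hpt : IsPartition pt) (hP : IsdFCoherent (AC pt) P)
    (hag : ∀ p ∈ AC pt, ν p = P p)
    {n : ℕ} (hn : 1 ≤ n) (X : Fin n → Ω → ℝ) (Bs : Fin n → Set Ω) (s : Fin n → ℝ)
    (hcl : ∀ i, (X i, Bs i) ∈ AC pt ∨ (X i, Bs i) = (ind C, D))
    (hDsub : D ⊆ ⋃ i, Bs i)
    {Astar Bstar : Set Ω} (hmemStar : (ind Astar, Bstar) ∈ AC pt)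
    (hBstarNe : Bstar.Nonempty)
    {t : ℝ} (htdef : t = ∑ i, if (X i, Bs i) ∈ AC pt then (0:ℝ) else s i)
    (hstep : ∀ e ∈ pt, ∀ ω ∈ e, ∃ ω' ∈ e, (ω ∈ Bstar → ω' ∈ D) ∧
      t * gainTerm P (ind Astar) Bstar ω ≤ t * gainTerm ν (ind C) D ω') :
    0 ≤ sSup ((fun ω => ∑ i, s i * gainTerm ν (X i) (Bs i) ω) '' (⋃ i, Bs i)) := by
  classical
  set X' : Fin n → Ω → ℝ := fun i => if (X i, Bs i) ∈ AC pt then X i else ind Astar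
    with hX'
  set Bs' : Fin n → Set Ω := fun i => if (X i, Bs i) ∈ AC pt then Bs i else Bstar
    with hBs'
  have hmem' : ∀ i, (X' i, Bs' i) ∈ AC pt := by
    intro i
    by_cases hi : (X i, Bs i) ∈ AC pt
    · simpa [hX', hBs', hi] using hi
    · simpa [hX', hBs', hi] using hmemStar
  have hcoh := hP n hn X' Bs' s hmem'
  have hXi : ∀ i, ∃ A, X i = ind A := fun i => by
    rcases hcl i with h | h
    · obtain ⟨A, B, _, _, _, hEq⟩ := h
      exact ⟨A, congrArg Prod.fst hEq⟩
    · exact ⟨C, congrArg Prod.fst h⟩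
  choose As hAs using hXi
  have hbddG : BddAbove ((fun ω => ∑ i, s i * gainTerm ν (X i) (Bs i) ω)
      '' (⋃ i, Bs i)) := by
    apply bddAbove_image_of_le (M := ∑ i, |s i| * (1 + |ν (ind (As i), Bs i)|))
    intro ω
    refine Finset.sum_le_sum fun i _ => ?_
    rw [hAs i]
    calc s i * gainTerm ν (ind (As i)) (Bs i) ω
        ≤ |s i * gainTerm ν (ind (As i)) (Bs i) ω| := le_abs_self _
      _ = |s i| * |gainTerm ν (ind (As i)) (Bs i) ω| := abs_mul _ _
      _ ≤ |s i| * (1 + |ν (ind (As i), Bs i)|) :=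
          mul_le_mul_of_nonneg_left (gainTerm_abs_le _ _ _ _) (abs_nonneg _)
  have hne' : (⋃ i, Bs' i).Nonempty := by
    have i0 : Fin n := ⟨0, hn⟩
    have hB0 : (Bs' i0).Nonempty := by
      by_cases hi : (X i0, Bs i0) ∈ AC pt
      · have hi0 := hi
        obtain ⟨A, B, _, _, hBne, hEq⟩ := hi
        have hBB : Bs i0 = B := congrArg Prod.snd hEq
        simp only [hBs', if_pos hi0]
        exact hBB ▸ hBne
      · simpa [hBs', hi] using hBstarNe
    exact hB0.mono (Set.subset_iUnion Bs' i0)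
  have htrans : ∀ ω ∈ ⋃ i, Bs' i, ∃ ω' ∈ ⋃ i, Bs i,
      (∑ i, s i * gainTerm P (X' i) (Bs' i) ω) ≤ ∑ i, s i * gainTerm ν (X i) (Bs i) ω' := by
    intro ω hω
    obtain ⟨e, he, hωe⟩ := exists_atom hpt ω
    obtain ⟨ω', hω'e, himp, hineq⟩ := hstep e he ω hωe
    have hω'mem : ω' ∈ ⋃ i, Bs i := by
      by_cases hB : ω ∈ Bstar
      · exact hDsub (himp hB)
      · obtain ⟨i, hi⟩ := Set.mem_iUnion.mp hω
        have hIac : (X i, Bs i) ∈ AC pt := by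
          by_contra h
          rw [hBs'] at hi
          simp only [if_neg h] at hi
          exact hB hi
        have hi2 : ω ∈ Bs i := by
          rw [hBs'] at hi
          simpa [if_pos hIac] using hi
        obtain ⟨A, B, hA, hBmem, hBne, hEq⟩ := hIac
        have hBsB : Bs i = B := congrArg Prod.snd hEq
        have hsub : e ⊆ Bs i := atom_subset_of_memA hpt (hBsB ▸ hBmem) he hωe hi2
        exact Set.mem_iUnion.mpr ⟨i, hsub hω'e⟩
    refine ⟨ω', hω'mem, ?_⟩
    have hGH : (∑ i, s i * gainTerm ν (X i) (Bs i) ω')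
        = (∑ i, s i * gainTerm P (X' i) (Bs' i) ω)
          + t * (gainTerm ν (ind C) D ω' - gainTerm P (ind Astar) Bstar ω) := by
      rw [htdef, Finset.sum_mul, ← Finset.sum_add_distrib]
      refine Finset.sum_congr rfl fun i _ => ?_
      by_cases hi : (X i, Bs i) ∈ AC pt
      · have hi0 := hi
        have h1 : X' i = X i := by simp [hX', hi]
        have h2 : Bs' i = Bs i := by simp [hBs', hi]
        have hagEq : ν (X i, Bs i) = P (X i, Bs i) := hag _ hi
        obtain ⟨A, B, hA, hBmem, hBne, hEq⟩ := hi
        have hXA : X i = ind A := congrArg Prod.fst hEq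
        have hBsB : Bs i = B := congrArg Prod.snd hEq
        have hconst : gainTerm P (X i) (Bs i) ω' = gainTerm P (X i) (Bs i) ω := by
          rw [hXA, hBsB]
          exact gainTerm_const_on_atom hpt hA hBmem he hω'e hωe
        rw [if_pos hi0, gainTerm_congr hagEq, hconst, h1, h2]
        ring
      · have hEq := (hcl i).resolve_left hi
        have hXC : X i = ind C := congrArg Prod.fst hEq
        have hBsD : Bs i = D := congrArg Prod.snd hEq
        have h1 : X' i = ind Astar := by simp [hX', hi]
        have h2 : Bs' i = Bstar := by simp [hBs', hi]
        rw [if_neg hi, hXC, hBsD, h1, h2]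
        ring
    rw [hGH, mul_sub] at *
    linarith [hineq]
  refine le_trans hcoh (csSup_le (hne'.image _) ?_)
  rintro y ⟨ω, hω, rfl⟩
  obtain ⟨ω', hω', hle⟩ := htrans ω hω
  exact le_csSup_of_le hbddG (Set.mem_image_of_mem _ hω') hle

end BackwardCore
section BackwardMain
variable {Ω : Type*} {pt : Set (Set Ω)} {P ν : (Ω → ℝ) × Set Ω → ℝ} {C D : Set Ω}

lemma backward_dir (hpt : IsPartition pt) (hP : IsdFCoherent (AC pt) P)
    (h1 : (C ∩ D).Nonempty) (h2 : (Cᶜ ∩ D).Nonempty)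
    (hag : ∀ p ∈ AC pt, ν p = P p)
    (hpx : P (innerCE pt C D) ≤ ν (ind C, D))
    (hxq : ν (ind C, D) ≤ P (outerCE pt C D)) :
    IsdFCoherent (AC pt ∪ {(ind C, D)}) ν := by
  classical
  intro n hn X Bs s hmem
  have hcl : ∀ i, (X i, Bs i) ∈ AC pt ∨ (X i, Bs i) = (ind C, D) := fun i => by
    rcases hmem i with h | h
    · exact Or.inl h
    · exact Or.inr h
  by_cases hall : ∀ i, (X i, Bs i) ∈ AC pt
  · have heq : (fun ω => ∑ i, s i * gainTerm ν (X i) (Bs i) ω)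
        = fun ω => ∑ i, s i * gainTerm P (X i) (Bs i) ω := by
      funext ω
      exact Finset.sum_congr rfl fun i _ => by rw [gainTerm_congr (hag _ (hall i))]
    rw [heq]
    exact hP n hn X Bs s hall
  · push_neg at hall
    obtain ⟨j0, hj0⟩ := hall
    have hEq := (hcl j0).resolve_left hj0
    have hBsD : Bs j0 = D := congrArg Prod.snd hEq
    have hDsub : D ⊆ ⋃ i, Bs i := hBsD ▸ Set.subset_iUnion Bs j0
    set t := ∑ i, if (X i, Bs i) ∈ AC pt then (0:ℝ) else s i with htdef
    by_cases ht : 0 ≤ t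
    · have hxq' : ν (ind C, D) ≤ P (ind (outerE pt (C ∩ D)),
          outerE pt (C ∩ D) ∪ innerE pt (Cᶜ ∩ D)) := hxq
      refine backward_core hpt hP hag hn X Bs s hcl hDsub
        (Astar := outerE pt (C ∩ D)) (Bstar := outerE pt (C ∩ D) ∪ innerE pt (Cᶜ ∩ D))
        (outerCE_mem_AC hpt h1)
        ((h1.mono (subset_outerE hpt _)).mono Set.subset_union_left) htdef ?_
      intro e he ω hωe
      obtain ⟨ω', hω'e, himp, hineq⟩ := stepA_outer hpt he hωe ht hxq' (C := C) (D := D)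
      refine ⟨ω', hω'e, himp, ?_⟩
      simp only [gainTerm_apply, ind_apply]
      exact hineq
    · have ht' : t ≤ 0 := le_of_not_ge ht
      have hpx' : P (ind (innerE pt (C ∩ D)),
          innerE pt (C ∩ D) ∪ outerE pt (Cᶜ ∩ D)) ≤ ν (ind C, D) := hpx
      refine backward_core hpt hP hag hn X Bs s hcl hDsub
        (Astar := innerE pt (C ∩ D)) (Bstar := innerE pt (C ∩ D) ∪ outerE pt (Cᶜ ∩ D))
        (innerCE_mem_AC hpt h2)
        ((h2.mono (subset_outerE hpt _)).mono Set.subset_union_right) htdef ?_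
      intro e he ω hωe
      obtain ⟨ω', hω'e, himp, hineq⟩ := stepA_inner hpt he hωe ht' hpx' (C := C) (D := D)
      refine ⟨ω', hω'e, himp, ?_⟩
      simp only [gainTerm_apply, ind_apply]
      exact hineq

end BackwardMain


/-- A map agreeing with a dF-coherent conditional probability on `𝒜_C(pt)`
extends dF-coherently to an additional conditional event `C|D` iff its value there lies
between the values of the inner event `(C|D)_*` and the outer event `(C|D)^*`. -/
theorem stmt_8 {Ω : Type*} [Nonempty Ω] (pt : Set (Set Ω)) (hpt : IsPartition pt)
    (P ν : (Ω → ℝ) × Set Ω → ℝ)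
    (hP : IsdFCoherent (AC pt) P)
    (C D : Set Ω) (h1 : (C ∩ D).Nonempty) (h2 : (Cᶜ ∩ D).Nonempty)
    (hag : ∀ p ∈ AC pt, ν p = P p) :
    IsdFCoherent (AC pt ∪ {(ind C, D)}) ν ↔
      (P (innerCE pt C D) ≤ ν (ind C, D) ∧ ν (ind C, D) ≤ P (outerCE pt C D)) := by
  constructor
  · exact fun hco => forward_dir hpt h1 h2 hag hco
  · rintro ⟨hpx, hxq⟩
    exact backward_dir hpt hP h1 h2 hag hpx hxq
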